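/- arXiv:2004.08220 — 3 statements merged into one kernel-verified Lean document; each statement's English description precedes it below -/
import Mathlib

section
/- Let X_t and X_{t'} be jointly distributed finite random vectors with n components each. Assume Un^(k) satisfies the source data-processing inequality (Un^(k)(W;Y|X) ≤ Un^(k)(Z;Y|X) whenever W−Z−(X,Y) is a Markov chain) and the self-unique identity Un^(k)(X;Y|X) = Syn^(k)(X;Y). Then for every supervenient feature V_t one has Un^(k)(V_t;X_{t'}|X_t) ≤ Syn^(k)(X_t;X_{t'}); in particular Syn^(k)(X_t;X_{t'}) upper-bounds the unique information of all possible supervenient features (the emergence capacity of the system). -/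
/-!
Framework: finite probability.  A finite sample space `Ω` carries a probability
mass function `μ : Ω → ℝ`; random variables are functions on `Ω`.
-/

noncomputable section

open scoped BigOperators

attribute [local instance] Classical.propDecidable

variable {Ω : Type} [Fintype Ω]

/-- The probability that the random variable `f` takes the value `a`, under the pmf `μ`. -/
def prEq (μ : Ω → ℝ) {A : Type} (f : Ω → A) (a : A) : ℝ :=
  ∑ ω, if f ω = a then μ ω else 0

/-- `μ` is a probability mass function on the finite sample space `Ω`. -/
def IsPMF (μ : Ω → ℝ) : Prop :=
  (∀ ω, 0 ≤ μ ω) ∧ ∑ ω, μ ω = 1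

/-- The Markov chain `f − g − h`: `f` and `h` are conditionally independent given `g`. -/
def MarkovChain (μ : Ω → ℝ) {A B C : Type} (f : Ω → A) (g : Ω → B) (h : Ω → C) : Prop :=
  ∀ a b c,
    prEq μ (fun ω => (f ω, g ω, h ω)) (a, b, c) * prEq μ g b =
      prEq μ (fun ω => (f ω, g ω)) (a, b) * prEq μ (fun ω => (g ω, h ω)) (b, c)

/-- Statistical independence of two random variables. -/
def IndepRV (μ : Ω → ℝ) {A B : Type} (f : Ω → A) (g : Ω → B) : Prop :=
  ∀ a b, prEq μ (fun ω => (f ω, g ω)) (a, b) = prEq μ f a * prEq μ g b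

/-- Shannon mutual information `I(f;g)`. -/
def mutInfo (μ : Ω → ℝ) {A B : Type} (f : Ω → A) (g : Ω → B) : ℝ :=
  ∑ a ∈ Finset.univ.image f, ∑ b ∈ Finset.univ.image g,
    prEq μ (fun ω => (f ω, g ω)) (a, b) *
      Real.log (prEq μ (fun ω => (f ω, g ω)) (a, b) / (prEq μ f a * prEq μ g b))

/-- Conditional mutual information `I(f;g|h)`. -/
def condMutInfo (μ : Ω → ℝ) {A B C : Type} (f : Ω → A) (g : Ω → B) (h : Ω → C) : ℝ :=
  ∑ a ∈ Finset.univ.image f, ∑ b ∈ Finset.univ.image g, ∑ c ∈ Finset.univ.image h,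
    prEq μ (fun ω => (f ω, g ω, h ω)) (a, b, c) *
      Real.log ((prEq μ h c * prEq μ (fun ω => (f ω, g ω, h ω)) (a, b, c)) /
        (prEq μ (fun ω => (f ω, h ω)) (a, c) * prEq μ (fun ω => (g ω, h ω)) (b, c)))

/-- Conditional entropy `H(f|g)`. -/
def condEntropyRV (μ : Ω → ℝ) {A B : Type} (f : Ω → A) (g : Ω → B) : ℝ :=
  -∑ a ∈ Finset.univ.image f, ∑ b ∈ Finset.univ.image g,
    prEq μ (fun ω => (f ω, g ω)) (a, b) *
      Real.log (prEq μ (fun ω => (f ω, g ω)) (a, b) / prEq μ g b)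

/-- The sub-vector `X^α` of the random vector `X`, for a set of indices `α ⊆ [n]`. -/
def subvec {n : ℕ} {𝓧 : Fin n → Type} (X : Ω → ∀ i, 𝓧 i) (α : Finset (Fin n)) :
    Ω → ∀ i : α, 𝓧 i :=
  fun ω i => X ω i

/-- The collection of all subsets of `[n]` of cardinality `k`. -/
def kSets (n k : ℕ) : Finset (Finset (Fin n)) :=
  Finset.univ.filter fun α => α.card = k

/-!
A supervenient feature `V` satisfies `V − X − X'`, and since `X` is a function of itself this
upgrades to `V − X − (X, X')`. The source data-processing inequality then gives
`Un(V) ≤ Un(X)`, and the self-unique identity turns `Un(X)` into the synergy.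
-/

section MarkovChain

variable {μ : Ω → ℝ} {A B C : Type}

theorem prEq_congr {f : Ω → A} {g : Ω → B} {a : A} {b : B}
    (h : ∀ ω, f ω = a ↔ g ω = b) : prEq μ f a = prEq μ g b :=
  Finset.sum_congr rfl fun ω _ => if_congr (h ω) rfl rfl

theorem prEq_eq_zero {f : Ω → A} {a : A} (h : ∀ ω, f ω ≠ a) : prEq μ f a = 0 :=
  Finset.sum_eq_zero fun ω _ => if_neg (h ω)

theorem MarkovChain.prod_self_right {f : Ω → A} {g : Ω → B} {h : Ω → C}
    (hfgh : MarkovChain μ f g h) : MarkovChain μ f g (fun ω => (g ω, h ω)) := by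
  rintro a b ⟨b', c⟩
  by_cases hb : b' = b
  · subst hb
    have hfg : prEq μ (fun ω => (f ω, g ω, g ω, h ω)) (a, b', b', c)
        = prEq μ (fun ω => (f ω, g ω, h ω)) (a, b', c) :=
      prEq_congr fun ω => by simp only [Prod.mk.injEq]; tauto
    have hg : prEq μ (fun ω => (g ω, g ω, h ω)) (b', b', c)
        = prEq μ (fun ω => (g ω, h ω)) (b', c) :=
      prEq_congr fun ω => by simp only [Prod.mk.injEq]; tauto
    rw [hfg, hg]
    exact hfgh a b' c
  · have hfg : prEq μ (fun ω => (f ω, g ω, g ω, h ω)) (a, b, b', c) = 0 :=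
      prEq_eq_zero fun ω he => hb (by simp only [Prod.mk.injEq] at he; rw [← he.2.2.1, he.2.1])
    have hg : prEq μ (fun ω => (g ω, g ω, h ω)) (b, b', c) = 0 :=
      prEq_eq_zero fun ω he => hb (by simp only [Prod.mk.injEq] at he; rw [← he.2.1, he.1])
    rw [hfg, hg, zero_mul, mul_zero]

end MarkovChain

theorem synergy_bounds_unique_info_of_supervenient_general
    {Ω : Type} [Fintype Ω] (μ : Ω → ℝ)
    {n : ℕ} {𝓧 𝓨 : Fin n → Type}
    (X : Ω → ∀ i, 𝓧 i) (X' : Ω → ∀ i, 𝓨 i)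
    (Un : (V : Type) → (Ω → V) → ℝ)
    (Syn : ℝ)
    (hUn_dpi : ∀ (W Z : Type) (f : Ω → W) (g : Ω → Z),
      MarkovChain μ f g (fun ω => (X ω, X' ω)) → Un W f ≤ Un Z g)
    (hself : Un (∀ i, 𝓧 i) X = Syn) :
    ∀ (V : Type) (_ : Fintype V) (f : Ω → V),
      MarkovChain μ f X X' → Un V f ≤ Syn :=
  fun V _ f hsup => (hUn_dpi V _ f X hsup.prod_self_right).trans_eq hself

theorem synergy_bounds_unique_info_of_supervenient
    {Ω : Type} [Fintype Ω] (μ : Ω → ℝ) (hμ : IsPMF μ)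
    {n : ℕ} {𝓧 𝓨 : Fin n → Type} [∀ i, Fintype (𝓧 i)] [∀ i, Fintype (𝓨 i)]
    (X : Ω → ∀ i, 𝓧 i) (X' : Ω → ∀ i, 𝓨 i)
    (k : ℕ)
    (Un : (V : Type) → (Ω → V) → ℝ)
    (Syn : ℝ)
    (hUn_dpi : ∀ (W Z : Type) (f : Ω → W) (g : Ω → Z),
      MarkovChain μ f g (fun ω => (X ω, X' ω)) → Un W f ≤ Un Z g)
    (hself : Un (∀ i, 𝓧 i) X = Syn) :
    ∀ (V : Type) (_ : Fintype V) (f : Ω → V),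
      MarkovChain μ f X X' → Un V f ≤ Syn :=
  synergy_bounds_unique_info_of_supervenient_general μ X X' Un Syn hUn_dpi hself
end
end

section
/- Let X_t and X_{t'} be jointly distributed random vectors with n finite-valued components each, such that X_t and X_{t'} have the same marginal distribution (stationarity). Let p_{V|X} be a k-synergistic channel for X_t, and let V_t and V_{t'} be obtained by applying this channel to X_t and X_{t'} respectively, so that V_t−X_t−X_{t'}−V_{t'} is a Markov chain. Then p_{V|X} is also a k-synergistic channel for X_{t'}, and 𝒢_⋆^(k)(X_t;X_{t'}) ≥ I(V_t;V_{t'}). In particular, if the observable is auto-correlated (I(V_t;V_{t'}) > 0), then 𝒢_⋆^(k)(X_t;X_{t'}) > 0 and Syn_⋆^(k)(X_t;X_{t'}) > 0, i.e. every auto-correlated k-synergistic observable of a stationary system is k-th order emergent. -/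
/-!
Framework: finite probability.  A finite sample space `Ω` carries a probability
mass function `μ : Ω → ℝ`; random variables are functions on `Ω`.
-/

noncomputable section

open scoped BigOperators

attribute [local instance] Classical.propDecidable

variable {Ω : Type} [Fintype Ω]

/-- `c` is a channel (conditional probability kernel) from `A` to the finite alphabet `V`. -/
def IsChannel {A V : Type} [Fintype V] (c : A → V → ℝ) : Prop :=
  ∀ a, (∀ v, 0 ≤ c a v) ∧ ∑ v, c a v = 1

/-- The joint pmf on `Ω × V` obtained by feeding the random variable `X` into the
channel `c`. -/
def chanPMF {Ω : Type} (μ : Ω → ℝ) {A V : Type} (X : Ω → A) (c : A → V → ℝ) :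
    Ω × V → ℝ :=
  fun p => μ p.1 * c (X p.1) p.2

/-- The joint pmf on `Ω × V × U` obtained by feeding `X` into `c` and `Y` into `d`
(conditionally independently given `Ω`). -/
def chanPMF₂ {Ω : Type} (μ : Ω → ℝ) {A B V U : Type}
    (X : Ω → A) (Y : Ω → B) (c : A → V → ℝ) (d : B → U → ℝ) : Ω × V × U → ℝ :=
  fun p => μ p.1 * c (X p.1) p.2.1 * d (Y p.1) p.2.2

/-- The channel `c` is `k`-synergistic for the random vector `X`: in the induced joint
distribution, the channel output is independent of `X^α` for every `α` with `|α| = k`. -/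
def kSynChannel {Ω : Type} [Fintype Ω] (μ : Ω → ℝ) {n : ℕ} {𝓧 : Fin n → Type} {V : Type}
    [Fintype V] (X : Ω → ∀ i, 𝓧 i) (c : (∀ i, 𝓧 i) → V → ℝ) (k : ℕ) : Prop :=
  ∀ α ∈ kSets n k,
    IndepRV (chanPMF μ X c) (fun p => p.2) (fun p (i : α) => X p.1 i)

/-- `Syn⋆⁽ᵏ⁾(X;Y)`: the maximum information about `Y` extractable from a `k`-synergistic
channel applied to `X` (so that `V − X − Y` is a Markov chain by construction). -/
def SynStar {Ω : Type} [Fintype Ω] (μ : Ω → ℝ) {n : ℕ} {𝓧 𝓨 : Fin n → Type}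
    (X : Ω → ∀ i, 𝓧 i) (Y : Ω → ∀ i, 𝓨 i) (k : ℕ) : ℝ :=
  sSup {x : ℝ | ∃ (V : Type) (iV : Fintype V) (c : (∀ i, 𝓧 i) → V → ℝ),
    letI := iV
    IsChannel c ∧ kSynChannel μ X c k ∧
      x = mutInfo (chanPMF μ X c) (fun p => p.2) (fun p => Y p.1)}

/-- `𝒢⋆⁽ᵏ⁾(X;Y)`: the maximum shared information between outputs of `k`-synergistic
channels applied at both ends (so that `V − X − Y − U` is a Markov chain). -/
def GStar {Ω : Type} [Fintype Ω] (μ : Ω → ℝ) {n : ℕ} {𝓧 𝓨 : Fin n → Type}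
    (X : Ω → ∀ i, 𝓧 i) (Y : Ω → ∀ i, 𝓨 i) (k : ℕ) : ℝ :=
  sSup {x : ℝ | ∃ (V U : Type) (iV : Fintype V) (iU : Fintype U)
      (c : (∀ i, 𝓧 i) → V → ℝ) (d : (∀ i, 𝓨 i) → U → ℝ),
    letI := iV
    letI := iU
    IsChannel c ∧ IsChannel d ∧ kSynChannel μ X c k ∧ kSynChannel μ Y d k ∧
      x = mutInfo (chanPMF₂ μ X Y c d) (fun p => p.2.1) (fun p => p.2.2)}

/-!
The law of `(V, X^α)` produced by a channel depends on its input only through the law of the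
input, so under stationarity a `k`-synergistic channel for `X_t` is one for `X_{t'}` as well.
Using it at both ends is then admissible for `𝒢⋆`, and by data processing
`I(V_t;V_{t'}) ≤ I(V_t;X_{t'})`, a value admissible for `Syn⋆`. Both suprema are finite since
all these informations are at most `log |𝓧|`. Data processing is the log-sum inequality applied
to the factorisation `p(v,u) = ∑_y p(v,y) d(y,u)` of the joint law as a matrix product.
-/

open Finset

theorem mul_log_add_sub_le_mul_log_div {a b r : ℝ} (ha : 0 ≤ a) (hb : 0 ≤ b)
    (hab : b = 0 → a = 0) (hr : 0 < r) :
    a * Real.log r + a - b * r ≤ a * Real.log (a / b) := by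
  rcases ha.eq_or_lt with rfl | ha
  · simpa using mul_nonneg hb hr.le
  have hb : 0 < b := hb.lt_of_ne fun h => ha.ne' (hab h.symm)
  have hlog := Real.log_le_sub_one_of_pos (x := b * r / a) (by positivity)
  rw [Real.log_div (by positivity) ha.ne', Real.log_mul hb.ne' hr.ne'] at hlog
  rw [Real.log_div ha.ne' hb.ne']
  have hcancel : a * (b * r / a) = b * r := by field_simp
  nlinarith [mul_le_mul_of_nonneg_left hlog ha.le]

theorem sum_mul_log_sum_div_sum_le {ι : Type*} (s : Finset ι) {a b : ι → ℝ}
    (ha : ∀ i ∈ s, 0 ≤ a i) (hb : ∀ i ∈ s, 0 ≤ b i) (hab : ∀ i ∈ s, b i = 0 → a i = 0) :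
    (∑ i ∈ s, a i) * Real.log ((∑ i ∈ s, a i) / ∑ i ∈ s, b i) ≤
      ∑ i ∈ s, a i * Real.log (a i / b i) := by
  set A := ∑ i ∈ s, a i
  set B := ∑ i ∈ s, b i
  rcases (sum_nonneg ha).eq_or_lt with hA | hA
  · have hzero : ∀ i ∈ s, a i = 0 := (sum_eq_zero_iff_of_nonneg ha).mp hA.symm
    rw [show A = 0 from hA.symm, zero_mul, sum_eq_zero fun i hi => by rw [hzero i hi, zero_mul]]
  have hB : 0 < B := by
    obtain ⟨i, hi, hai⟩ := (sum_pos_iff_of_nonneg ha).mp hA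
    have hbi : 0 < b i := (hb i hi).lt_of_ne fun h => hai.ne' (hab i hi h.symm)
    exact (sum_pos_iff_of_nonneg hb).mpr ⟨i, hi, hbi⟩
  calc A * Real.log (A / B) = ∑ i ∈ s, (a i * Real.log (A / B) + a i - b i * (A / B)) := by
        rw [sum_sub_distrib, sum_add_distrib, ← sum_mul, ← sum_mul]
        field_simp
        ring
    _ ≤ ∑ i ∈ s, a i * Real.log (a i / b i) := sum_le_sum fun i hi =>
        mul_log_add_sub_le_mul_log_div (ha i hi) (hb i hi) (hab i hi) (by positivity)

def mutInfoOfJoint {V U : Type*} [Fintype V] [Fintype U] (p : Matrix V U ℝ) : ℝ :=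
  ∑ v, ∑ u, p v u * Real.log (p v u / ((∑ u', p v u') * ∑ v', p v' u))

section MutInfoOfJoint

variable {V S U : Type*} [Fintype V] [Fintype S] [Fintype U]

theorem mutInfoOfJoint_le_log_card {p : Matrix V U ℝ} (hp : ∀ v u, 0 ≤ p v u)
    (htot : ∑ v, ∑ u, p v u = 1) :
    mutInfoOfJoint p ≤ Real.log (Fintype.card U) := by
  set pU : U → ℝ := fun u => ∑ v, p v u
  have hpU : ∀ u, 0 ≤ pU u := fun u => sum_nonneg fun v _ => hp v u
  have hpU_tot : ∑ u, pU u = 1 := by rw [← htot, sum_comm]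
  have hterm : ∀ v u, p v u * Real.log (p v u / ((∑ u', p v u') * pU u)) ≤
      p v u * Real.log (pU u)⁻¹ := by
    intro v u
    rcases (hp v u).eq_or_lt with h | h
    · rw [← h, zero_mul, zero_mul]
    have hrow : p v u ≤ ∑ u', p v u' := single_le_sum (fun u' _ => hp v u') (mem_univ u)
    have hcol : 0 < pU u := h.trans_le (single_le_sum (fun v' _ => hp v' u) (mem_univ v))
    have hrow_pos : 0 < ∑ u', p v u' := h.trans_le hrow
    refine mul_le_mul_of_nonneg_left (Real.log_le_log (by positivity) ?_) h.le
    calc p v u / ((∑ u', p v u') * pU u) ≤ (∑ u', p v u') / ((∑ u', p v u') * pU u) := by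
          gcongr
      _ = (pU u)⁻¹ := by field_simp
  -- Gibbs' inequality against the uniform weights
  have hgibbs := sum_mul_log_sum_div_sum_le univ (a := pU) (b := fun _ => 1)
    (fun u _ => hpU u) (fun _ _ => zero_le_one) (fun _ _ h => absurd h one_ne_zero)
  simp only [hpU_tot, sum_const, card_univ, nsmul_eq_mul, mul_one, one_mul, div_one,
    one_div, Real.log_inv] at hgibbs
  calc mutInfoOfJoint p ≤ ∑ v, ∑ u, p v u * Real.log (pU u)⁻¹ :=
        sum_le_sum fun v _ => sum_le_sum fun u _ => hterm v u
    _ = -∑ u, pU u * Real.log (pU u) := by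
        simp only [Real.log_inv, mul_neg, sum_neg_distrib, pU, sum_mul]
        rw [sum_comm]
    _ ≤ Real.log (Fintype.card U) := by linarith

theorem mutInfoOfJoint_mul_le {q : Matrix V S ℝ} {e : Matrix S U ℝ} (hq : ∀ v s, 0 ≤ q v s)
    (he : ∀ s u, 0 ≤ e s u) (he1 : ∀ s, ∑ u, e s u = 1) :
    mutInfoOfJoint (q * e) ≤ mutInfoOfJoint q := by
  set qV : V → ℝ := fun v => ∑ s, q v s
  set qS : S → ℝ := fun s => ∑ v, q v s
  have hrow : ∀ v, ∑ u, (q * e) v u = qV v := fun v => by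
    simp only [Matrix.mul_apply, qV]
    rw [sum_comm]
    exact sum_congr rfl fun s _ => by rw [← mul_sum, he1, mul_one]
  have hcol : ∀ u, ∑ v, (q * e) v u = ∑ s, qS s * e s u := fun u => by
    simp only [Matrix.mul_apply, qS, sum_mul]
    exact sum_comm
  have hterm : ∀ v u, (q * e) v u * Real.log ((q * e) v u / (qV v * ∑ v', (q * e) v' u)) ≤
      ∑ s, q v s * e s u * Real.log (q v s / (qV v * qS s)) := by
    intro v u
    have hsum : ∑ s, qV v * qS s * e s u = qV v * ∑ v', (q * e) v' u := by
      rw [hcol, mul_sum]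
      exact sum_congr rfl fun s _ => by ring
    have hlogsum := sum_mul_log_sum_div_sum_le univ (a := fun s => q v s * e s u)
      (b := fun s => qV v * qS s * e s u)
      (fun s _ => mul_nonneg (hq v s) (he s u))
      (fun s _ => mul_nonneg (mul_nonneg (sum_nonneg fun _ _ => hq _ _)
        (sum_nonneg fun _ _ => hq _ _)) (he s u))
      (fun s _ h => by
        rcases mul_eq_zero.mp h with h | h
        · rcases mul_eq_zero.mp h with h | h
          · rw [(sum_eq_zero_iff_of_nonneg fun s _ => hq v s).mp h s (mem_univ s), zero_mul]
          · rw [(sum_eq_zero_iff_of_nonneg fun v _ => hq v s).mp h v (mem_univ v), zero_mul]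
        · rw [h, mul_zero])
    rw [hsum, ← Matrix.mul_apply] at hlogsum
    refine hlogsum.trans_eq (sum_congr rfl fun s _ => ?_)
    rcases (he s u).eq_or_lt with h | h
    · simp [← h]
    · rw [mul_div_mul_right _ _ h.ne']
  calc mutInfoOfJoint (q * e)
      = ∑ v, ∑ u, (q * e) v u * Real.log ((q * e) v u / (qV v * ∑ v', (q * e) v' u)) := by
        simp only [mutInfoOfJoint, hrow]
    _ ≤ ∑ v, ∑ u, ∑ s, q v s * e s u * Real.log (q v s / (qV v * qS s)) :=
        sum_le_sum fun v _ => sum_le_sum fun u _ => hterm v u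
    _ = mutInfoOfJoint q := by
        refine sum_congr rfl fun v _ => ?_
        rw [sum_comm]
        refine sum_congr rfl fun s _ => ?_
        rw [← sum_mul, ← mul_sum, he1, mul_one]

end MutInfoOfJoint

section PrEq

variable {A B : Type}

theorem prEq_nonneg {ν : Ω → ℝ} (hν : ∀ ω, 0 ≤ ν ω) (f : Ω → A) (a : A) : 0 ≤ prEq ν f a :=
  sum_nonneg fun ω _ => ite_nonneg (hν ω) le_rfl

theorem sum_prEq [Fintype A] (ν : Ω → ℝ) (f : Ω → A) : ∑ a, prEq ν f a = ∑ ω, ν ω := by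
  simp only [prEq]
  rw [sum_comm]
  simp

theorem prEq_eq_zero_of_forall_ne (ν : Ω → ℝ) {f : Ω → A} {a : A} (h : ∀ ω, f ω ≠ a) :
    prEq ν f a = 0 :=
  sum_eq_zero fun ω _ => if_neg (h ω)

theorem sum_prEq_pair_right [Fintype B] (ν : Ω → ℝ) (f : Ω → A) (g : Ω → B) (a : A) :
    ∑ b, prEq ν (fun ω => (f ω, g ω)) (a, b) = prEq ν f a := by
  simp only [prEq, Prod.mk.injEq]
  rw [sum_comm]
  refine sum_congr rfl fun ω _ => ?_
  by_cases h : f ω = a <;> simp [h]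

theorem sum_prEq_pair_left [Fintype A] (ν : Ω → ℝ) (f : Ω → A) (g : Ω → B) (b : B) :
    ∑ a, prEq ν (fun ω => (f ω, g ω)) (a, b) = prEq ν g b := by
  simp only [prEq, Prod.mk.injEq]
  rw [sum_comm]
  refine sum_congr rfl fun ω _ => ?_
  by_cases h : g ω = b <;> simp [h]

def jointMatrix (ν : Ω → ℝ) (f : Ω → A) (g : Ω → B) : Matrix A B ℝ :=
  Matrix.of fun a b => prEq ν (fun ω => (f ω, g ω)) (a, b)

theorem jointMatrix_nonneg {ν : Ω → ℝ} (hν : ∀ ω, 0 ≤ ν ω) (f : Ω → A) (g : Ω → B) (a : A)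
    (b : B) : 0 ≤ jointMatrix ν f g a b :=
  prEq_nonneg hν _ _

theorem sum_jointMatrix [Fintype A] [Fintype B] (ν : Ω → ℝ) (f : Ω → A) (g : Ω → B) :
    ∑ a, ∑ b, jointMatrix ν f g a b = ∑ ω, ν ω := by
  simp only [jointMatrix, Matrix.of_apply]
  rw [← Fintype.sum_prod_type']
  exact sum_prEq ν _

theorem mutInfo_eq_mutInfoOfJoint [Fintype A] [Fintype B] (ν : Ω → ℝ) (f : Ω → A)
    (g : Ω → B) : mutInfo ν f g = mutInfoOfJoint (jointMatrix ν f g) := by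
  have hout : ∀ a b, (a ∉ univ.image f ∨ b ∉ univ.image g) →
      prEq ν (fun ω => (f ω, g ω)) (a, b) = 0 := fun a b h =>
    prEq_eq_zero_of_forall_ne ν fun ω hω => by
      simp only [Prod.mk.injEq] at hω
      rcases h with h | h
      · exact h (hω.1 ▸ mem_image_of_mem f (mem_univ ω))
      · exact h (hω.2 ▸ mem_image_of_mem g (mem_univ ω))
  simp only [mutInfo, mutInfoOfJoint, jointMatrix, Matrix.of_apply, sum_prEq_pair_left,
    sum_prEq_pair_right]
  refine sum_subset (subset_univ _) (fun a _ ha => ?_) |>.trans ?_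
  · exact sum_eq_zero fun b _ => by rw [hout a b (Or.inl ha), zero_mul]
  refine sum_congr rfl fun a _ => sum_subset (subset_univ _) fun b _ hb => ?_
  rw [hout a b (Or.inr hb), zero_mul]

end PrEq

section Channel

variable {μ : Ω → ℝ} {A B V U : Type} [Fintype V]

theorem IsPMF.chanPMF (hμ : IsPMF μ) {c : A → V → ℝ} (hc : IsChannel c) (X : Ω → A) :
    IsPMF (chanPMF μ X c) := by
  refine ⟨fun p => mul_nonneg (hμ.1 p.1) ((hc _).1 p.2), ?_⟩
  simp only [_root_.chanPMF, Fintype.sum_prod_type, ← mul_sum, (hc _).2, mul_one, hμ.2]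

theorem prEq_chanPMF_comp [Fintype A] {T : Type} (X : Ω → A) (c : A → V → ℝ)
    (F : A → V → T) (t : T) :
    prEq (chanPMF μ X c) (fun p => F (X p.1) p.2) t =
      ∑ s, prEq μ X s * ∑ v, if F s v = t then c s v else 0 := by
  simp only [prEq, chanPMF, Fintype.sum_prod_type, sum_mul, ite_mul, zero_mul]
  rw [sum_comm (s := univ (α := A))]
  refine sum_congr rfl fun ω _ => ?_
  rw [sum_ite_eq, if_pos (mem_univ _), mul_sum]
  exact sum_congr rfl fun v _ => by split_ifs <;> simp

theorem kSynChannel_of_prEq_eq {n : ℕ} {𝓧 : Fin n → Type} [∀ i, Fintype (𝓧 i)]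
    {X X' : Ω → ∀ i, 𝓧 i} (hX : ∀ s, prEq μ X s = prEq μ X' s) {c : (∀ i, 𝓧 i) → V → ℝ}
    {k : ℕ} (hc : kSynChannel μ X c k) : kSynChannel μ X' c k := by
  have hlaw : ∀ {T : Type} (F : (∀ i, 𝓧 i) → V → T) (t : T),
      prEq (chanPMF μ X' c) (fun p => F (X' p.1) p.2) t =
        prEq (chanPMF μ X c) (fun p => F (X p.1) p.2) t := fun F t => by
    simp only [prEq_chanPMF_comp, hX]
  intro α hα v x
  have hjoint := hlaw (fun s v => (v, fun i : α => s i)) (v, x)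
  have hV := hlaw (fun _ v => v) v
  have hXα := hlaw (fun s _ (i : α) => s i) x
  exact hjoint.trans ((hc α hα v x).trans (by rw [← hV, ← hXα]))

theorem jointMatrix_chanPMF₂ [Fintype B] [Fintype U] (μ : Ω → ℝ) (X : Ω → A) (Y : Ω → B)
    (c : A → V → ℝ) (d : B → U → ℝ) :
    jointMatrix (chanPMF₂ μ X Y c d) (fun p => p.2.1) (fun p => p.2.2) =
      jointMatrix (chanPMF μ X c) (fun p => p.2) (fun p => Y p.1) * Matrix.of d := by
  ext v u
  simp only [jointMatrix, prEq, chanPMF, chanPMF₂, Matrix.mul_apply, Matrix.of_apply,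
    Fintype.sum_prod_type, Prod.mk.injEq, sum_mul, ite_mul, zero_mul]
  rw [sum_comm (s := univ (α := B))]
  refine sum_congr rfl fun ω _ => ?_
  simp [ite_and]

theorem mutInfo_chanPMF₂_le_mutInfo_chanPMF [Fintype B] [Fintype U] (hμ : ∀ ω, 0 ≤ μ ω)
    (X : Ω → A) (Y : Ω → B) {c : A → V → ℝ} {d : B → U → ℝ} (hc : IsChannel c)
    (hd : IsChannel d) :
    mutInfo (chanPMF₂ μ X Y c d) (fun p => p.2.1) (fun p => p.2.2) ≤
      mutInfo (chanPMF μ X c) (fun p => p.2) (fun p => Y p.1) := by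
  rw [mutInfo_eq_mutInfoOfJoint, mutInfo_eq_mutInfoOfJoint, jointMatrix_chanPMF₂]
  exact mutInfoOfJoint_mul_le
    (jointMatrix_nonneg (fun p : Ω × V => mul_nonneg (hμ p.1) ((hc _).1 p.2)) _ _)
    (fun b => (hd b).1) (fun b => (hd b).2)

theorem mutInfo_chanPMF_le_log_card [Fintype B] (hμ : IsPMF μ) (X : Ω → A) (Y : Ω → B)
    {c : A → V → ℝ} (hc : IsChannel c) :
    mutInfo (chanPMF μ X c) (fun p => p.2) (fun p => Y p.1) ≤ Real.log (Fintype.card B) := by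
  have hν := hμ.chanPMF hc X
  rw [mutInfo_eq_mutInfoOfJoint]
  exact mutInfoOfJoint_le_log_card (jointMatrix_nonneg hν.1 _ _)
    ((sum_jointMatrix _ _ _).trans hν.2)

end Channel

section Star

variable {μ : Ω → ℝ} {n : ℕ} {𝓧 𝓨 : Fin n → Type} [∀ i, Fintype (𝓨 i)] {k : ℕ}

theorem le_SynStar (hμ : IsPMF μ) (X : Ω → ∀ i, 𝓧 i) (Y : Ω → ∀ i, 𝓨 i) {V : Type}
    [Fintype V] {c : (∀ i, 𝓧 i) → V → ℝ} (hc : IsChannel c) (hkc : kSynChannel μ X c k) :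
    mutInfo (chanPMF μ X c) (fun p => p.2) (fun p => Y p.1) ≤ SynStar μ X Y k := by
  refine le_csSup ⟨Real.log (Fintype.card (∀ i, 𝓨 i)), ?_⟩ ⟨V, inferInstance, c, hc, hkc, rfl⟩
  rintro x ⟨V', iV, c', hc', -, rfl⟩
  exact mutInfo_chanPMF_le_log_card hμ X Y hc'

theorem le_GStar (hμ : IsPMF μ) (X : Ω → ∀ i, 𝓧 i) (Y : Ω → ∀ i, 𝓨 i) {V U : Type}
    [Fintype V] [Fintype U] {c : (∀ i, 𝓧 i) → V → ℝ} {d : (∀ i, 𝓨 i) → U → ℝ}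
    (hc : IsChannel c) (hd : IsChannel d) (hkc : kSynChannel μ X c k)
    (hkd : kSynChannel μ Y d k) :
    mutInfo (chanPMF₂ μ X Y c d) (fun p => p.2.1) (fun p => p.2.2) ≤ GStar μ X Y k := by
  refine le_csSup ⟨Real.log (Fintype.card (∀ i, 𝓨 i)), ?_⟩
    ⟨V, U, inferInstance, inferInstance, c, d, hc, hd, hkc, hkd, rfl⟩
  rintro x ⟨V', U', iV, iU, c', d', hc', hd', -, -, rfl⟩
  exact (mutInfo_chanPMF₂_le_mutInfo_chanPMF hμ.1 X Y hc' hd').trans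
    (mutInfo_chanPMF_le_log_card hμ X Y hc')

end Star

theorem autocorrelated_synergistic_observables_are_emergent
    {Ω : Type} [Fintype Ω] (μ : Ω → ℝ) (hμ : IsPMF μ)
    {n : ℕ} {𝓧 : Fin n → Type} [∀ i, Fintype (𝓧 i)]
    (X X' : Ω → ∀ i, 𝓧 i)
    (hstat : ∀ s, prEq μ X s = prEq μ X' s)
    (k : ℕ) {V : Type} [Fintype V]
    (c : (∀ i, 𝓧 i) → V → ℝ) (hc : IsChannel c)
    (hkc : kSynChannel μ X c k) :
    kSynChannel μ X' c k ∧
      mutInfo (chanPMF₂ μ X X' c c) (fun p => p.2.1) (fun p => p.2.2)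
        ≤ GStar μ X X' k ∧
      (0 < mutInfo (chanPMF₂ μ X X' c c) (fun p => p.2.1) (fun p => p.2.2) →
        0 < GStar μ X X' k ∧ 0 < SynStar μ X X' k) := by
  have hkc' : kSynChannel μ X' c k := kSynChannel_of_prEq_eq hstat hkc
  have hG := le_GStar hμ X X' hc hc hkc hkc'
  refine ⟨hkc', hG, fun hpos => ⟨hpos.trans_le hG, hpos.trans_le ?_⟩⟩
  exact (mutInfo_chanPMF₂_le_mutInfo_chanPMF hμ.1 X X' hc hc).trans (le_SynStar hμ X X' hc hkc)
end
end

section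
/- Let n ≥ 1 and let I_∩ : 𝒜_{n+1} → ℝ and Ī_∩ : 𝒜_n → ℝ satisfy I_∩(f(𝜶)) = Ī_∩(𝜶) for all 𝜶 ∈ 𝒜_n, as well as I_∩({{n+1}}) = Ī_∩({[n]}). Let I_∂ and Ī_∂ be the Möbius inverses of I_∩ and Ī_∩ over the posets 𝒜_{n+1} and 𝒜_n respectively. Then I_∂(f(𝜶)) = Ī_∂(𝜶) for all 𝜶 ∈ 𝒜_n, and I_∂({{n+1}}) = 0. (This formalises steps 1, 2 and 4 of the proof of the paper's Lemma 3: appending the whole system as an extra source leaves the partial-information atoms unchanged, and the atom of the new singleton node vanishes.) -/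
noncomputable section

open scoped BigOperators

attribute [local instance] Classical.propDecidable

/-- The antichains of nonempty subsets of `[n] = {1,…,n}` (modelled as `Fin n`):
nonempty collections of nonempty subsets of `[n]`, no element of which is contained
in another distinct element. -/
def Antichains (n : ℕ) : Set (Finset (Finset (Fin n))) :=
  {A | A.Nonempty ∧ (∀ a ∈ A, a.Nonempty) ∧ ∀ a ∈ A, ∀ b ∈ A, a ≠ b → ¬a ⊆ b}

/-- The partial order on antichains: `A ⪯ B` iff every `b ∈ B` contains some `a ∈ A`. -/
def achLE {n : ℕ} (A B : Finset (Finset (Fin n))) : Prop :=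
  ∀ b ∈ B, ∃ a ∈ A, a ⊆ b

/-- Strict order on antichains: `A ≺ B` iff `A ⪯ B` and not `B ⪯ A`. -/
def achLT {n : ℕ} (A B : Finset (Finset (Fin n))) : Prop :=
  achLE A B ∧ ¬achLE B A

/-- `S_n⁽ᵏ⁾`: the antichains all of whose elements have cardinality `> k`. -/
def Sset (n k : ℕ) : Set (Finset (Finset (Fin n))) :=
  {A | A ∈ Antichains n ∧ ∀ a ∈ A, k < a.card}

/-- `R_n⁽ᵏ⁾`: the antichains with at least two distinct elements of cardinality `≤ k`. -/
def Rset (n k : ℕ) : Set (Finset (Finset (Fin n))) :=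
  {A | A ∈ Antichains n ∧ ∃ a ∈ A, ∃ b ∈ A, a ≠ b ∧ a.card ≤ k ∧ b.card ≤ k}

/-- `U_n⁽ᵏ⁾(β)`: the antichains containing `β` in which every element other than `β`
has cardinality `> k`. -/
def Uset (n k : ℕ) (β : Finset (Fin n)) : Set (Finset (Finset (Fin n))) :=
  {A | A ∈ Antichains n ∧ β ∈ A ∧ ∀ a ∈ A, a ≠ β → k < a.card}

/-- A subset of `[n]` viewed as a subset of `[n+1]`. -/
def liftSet {n : ℕ} (a : Finset (Fin n)) : Finset (Fin (n + 1)) :=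
  a.map ⟨Fin.castSucc, Fin.castSucc_injective n⟩

/-- The map `f : 𝒜_n → 𝒜_{n+1}`, `f(𝜶) = 𝜶 ∪ {{n+1}}` (the extra element `n+1` of
`[n+1]` is modelled by `Fin.last n`). -/
def fmap {n : ℕ} (A : Finset (Finset (Fin n))) : Finset (Finset (Fin (n + 1))) :=
  A.image liftSet ∪ {({Fin.last n} : Finset (Fin (n + 1)))}

/-!
The map `fmap` is an order embedding `𝒜_n → 𝒜_{n+1}` whose image consists of the antichains
containing `{n+1}` other than `{{n+1}}`. Hence the down-set of `f(𝜶)` is the `f`-image of the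
down-set of `𝜶`, so `𝜶 ↦ I_∂(f(𝜶))` is a Möbius inverse of `Ī_∩` and equals `Ī_∂` by uniqueness
of Möbius inversion. The down-set of `{{n+1}}` is `{{n+1}}` together with all of `f(𝒜_n)`, so
`I_∩({{n+1}}) = I_∂({{n+1}}) + Σ_{𝜶 ∈ 𝒜_n} Ī_∂(𝜶) = I_∂({{n+1}}) + Ī_∩({[n]})`, the last step
because `{[n]}` is the top of `𝒜_n`.
-/

open Finset

theorem Finset.eqOn_of_forall_sum_filter_eq {α M : Type*} [AddCommGroup M] {s : Finset α}
    {r : α → α → Prop} (hrefl : ∀ a ∈ s, r a a)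
    (htrans : ∀ a ∈ s, ∀ b ∈ s, ∀ c ∈ s, r a b → r b c → r a c)
    (hantisymm : ∀ a ∈ s, ∀ b ∈ s, r a b → r b a → a = b) {f g : α → M}
    (h : ∀ b ∈ s, ∑ c ∈ s with r c b, f c = ∑ c ∈ s with r c b, g c) :
    Set.EqOn f g s := by
  intro b hb
  induction hk : #{c ∈ s | r c b} using Nat.strong_induction_on generalizing b with
  | _ k ih =>
    have hb' : b ∈ {c ∈ s | r c b} := mem_filter.2 ⟨hb, hrefl b hb⟩
    have hlower : ∀ c ∈ {c ∈ s | r c b}.erase b, f c = g c := by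
      intro c hc
      obtain ⟨hcb, hcs, hrcb⟩ : c ≠ b ∧ c ∈ s ∧ r c b := by simpa using hc
      have hssubset : {d ∈ s | r d c} ⊂ {d ∈ s | r d b} := by
        refine ssubset_iff_subset_ne.2 ⟨?_, fun heq => hcb ?_⟩
        · exact monotone_filter_right s fun d hd hdc => htrans d hd c hcs b hb hdc hrcb
        · have hbc : r b c := (mem_filter.1 (heq.symm ▸ hb' : b ∈ {d ∈ s | r d c})).2
          exact hantisymm c hcs b hb hrcb hbc
      exact ih _ (hk ▸ card_lt_card hssubset) hcs rfl
    have hb_sum := h b hb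
    rw [← add_sum_erase _ _ hb', ← add_sum_erase _ _ hb',
      sum_congr rfl hlower] at hb_sum
    exact add_right_cancel hb_sum

section Antichains

variable {n : ℕ}

lemma achLE_refl (A : Finset (Finset (Fin n))) : achLE A A :=
  fun b hb => ⟨b, hb, subset_refl b⟩

lemma achLE_trans {A B C : Finset (Finset (Fin n))} (hAB : achLE A B) (hBC : achLE B C) :
    achLE A C := by
  intro c hc
  obtain ⟨b, hb, hbc⟩ := hBC c hc
  obtain ⟨a, ha, hab⟩ := hAB b hb
  exact ⟨a, ha, hab.trans hbc⟩

lemma subset_of_achLE_of_achLE {A B : Finset (Finset (Fin n))} (hA : A ∈ Antichains n)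
    (hAB : achLE A B) (hBA : achLE B A) : A ⊆ B := by
  intro a ha
  obtain ⟨b, hb, hba⟩ := hBA a ha
  obtain ⟨a', ha', ha'b⟩ := hAB b hb
  have ha'a : a' = a := by_contra fun hne => hA.2.2 a' ha' a ha hne (ha'b.trans hba)
  exact subset_antisymm hba (ha'a ▸ ha'b) ▸ hb

lemma achLE_antisymm {A B : Finset (Finset (Fin n))} (hA : A ∈ Antichains n)
    (hB : B ∈ Antichains n) (hAB : achLE A B) (hBA : achLE B A) : A = B :=
  subset_antisymm (subset_of_achLE_of_achLE hA hAB hBA) (subset_of_achLE_of_achLE hB hBA hAB)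

lemma singleton_mem_antichains {a : Finset (Fin n)} (ha : a.Nonempty) :
    ({a} : Finset (Finset (Fin n))) ∈ Antichains n := by
  refine ⟨singleton_nonempty a, ?_, ?_⟩
  · simpa using ha
  · simp

lemma singleton_mem_of_achLE {C B : Finset (Finset (Fin n))} {x : Fin n}
    (hC : ∀ c ∈ C, c.Nonempty) (hCB : achLE C B) (hx : {x} ∈ B) : {x} ∈ C := by
  obtain ⟨c, hc, hcx⟩ := hCB {x} hx
  rwa [(hC c hc).subset_singleton_iff.1 hcx] at hc

lemma achLE_singleton_of_mem {C : Finset (Finset (Fin n))} {a : Finset (Fin n)} (ha : a ∈ C) :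
    achLE C {a} := by
  simpa [achLE] using ⟨a, ha, subset_refl a⟩

lemma castSucc_mem_liftSet {a : Finset (Fin n)} {i : Fin n} :
    Fin.castSucc i ∈ liftSet a ↔ i ∈ a := by
  simp [liftSet]

lemma last_notMem_liftSet (a : Finset (Fin n)) : Fin.last n ∉ liftSet a := by
  simp [liftSet, Fin.castSucc_ne_last]

lemma liftSet_subset_liftSet {a b : Finset (Fin n)} : liftSet a ⊆ liftSet b ↔ a ⊆ b :=
  map_subset_map

lemma liftSet_injective : Function.Injective (liftSet (n := n)) :=
  map_injective _

lemma liftSet_nonempty {a : Finset (Fin n)} : (liftSet a).Nonempty ↔ a.Nonempty :=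
  map_nonempty

lemma exists_liftSet_eq {b : Finset (Fin (n + 1))} (hb : Fin.last n ∉ b) :
    ∃ a, liftSet a = b := by
  refine ⟨({i | Fin.castSucc i ∈ b} : Finset (Fin n)), ext fun x => ?_⟩
  cases x using Fin.lastCases with
  | last => simp only [last_notMem_liftSet, hb]
  | cast i => simp [castSucc_mem_liftSet]

lemma liftSet_ne_singleton_last (a : Finset (Fin n)) : liftSet a ≠ {Fin.last n} :=
  fun h => last_notMem_liftSet a (h ▸ mem_singleton_self _)

lemma mem_fmap {A : Finset (Finset (Fin n))} {b : Finset (Fin (n + 1))} :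
    b ∈ fmap A ↔ (∃ a ∈ A, liftSet a = b) ∨ b = {Fin.last n} := by
  simp [fmap, or_comm]

lemma liftSet_mem_fmap {A : Finset (Finset (Fin n))} {a : Finset (Fin n)} (ha : a ∈ A) :
    liftSet a ∈ fmap A :=
  mem_fmap.2 (Or.inl ⟨a, ha, rfl⟩)

lemma singleton_last_mem_fmap (A : Finset (Finset (Fin n))) : {Fin.last n} ∈ fmap A :=
  mem_fmap.2 (Or.inr rfl)

lemma fmap_mem_antichains {A : Finset (Finset (Fin n))} (hA : A ∈ Antichains n) :
    fmap A ∈ Antichains (n + 1) := by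
  obtain ⟨-, hnonempty, hanti⟩ := hA
  refine ⟨⟨_, singleton_last_mem_fmap A⟩, ?_, ?_⟩
  · intro b hb
    rcases mem_fmap.1 hb with ⟨a, ha, rfl⟩ | rfl
    · exact liftSet_nonempty.2 (hnonempty a ha)
    · exact singleton_nonempty _
  · intro b hb b' hb' hne hsub
    rcases mem_fmap.1 hb with ⟨a, ha, rfl⟩ | rfl <;>
      rcases mem_fmap.1 hb' with ⟨a', ha', rfl⟩ | rfl
    · exact hanti a ha a' ha' (fun h => hne (h ▸ rfl)) (liftSet_subset_liftSet.1 hsub)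
    · obtain ⟨x, hx⟩ := liftSet_nonempty.2 (hnonempty a ha)
      exact last_notMem_liftSet a (mem_singleton.1 (hsub hx) ▸ hx)
    · exact last_notMem_liftSet a' (hsub (mem_singleton_self _))
    · exact hne rfl

lemma achLE_fmap_fmap {C A : Finset (Finset (Fin n))} :
    achLE (fmap C) (fmap A) ↔ achLE C A := by
  constructor
  · intro h a ha
    obtain ⟨c, hc, hca⟩ := h _ (liftSet_mem_fmap ha)
    rcases mem_fmap.1 hc with ⟨c', hc', rfl⟩ | rfl
    · exact ⟨c', hc', liftSet_subset_liftSet.1 hca⟩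
    · exact absurd (hca (mem_singleton_self _)) (last_notMem_liftSet a)
  · intro h b hb
    rcases mem_fmap.1 hb with ⟨a, ha, rfl⟩ | rfl
    · obtain ⟨c, hc, hca⟩ := h a ha
      exact ⟨_, liftSet_mem_fmap hc, liftSet_subset_liftSet.2 hca⟩
    · exact ⟨_, singleton_last_mem_fmap C, subset_refl _⟩

lemma fmap_injOn : Set.InjOn fmap (Antichains n) := fun _ hA _ hB h =>
  achLE_antisymm hA hB (achLE_fmap_fmap.1 (h ▸ achLE_refl _))
    (achLE_fmap_fmap.1 (h ▸ achLE_refl _))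

lemma fmap_ne_singleton_singleton_last {A : Finset (Finset (Fin n))} (hA : A.Nonempty) :
    fmap A ≠ {{Fin.last n}} := by
  obtain ⟨a, ha⟩ := hA
  intro h
  exact liftSet_ne_singleton_last a (mem_singleton.1 (h ▸ liftSet_mem_fmap ha))

lemma exists_fmap_eq {C : Finset (Finset (Fin (n + 1)))} (hC : C ∈ Antichains (n + 1))
    (hlast : {Fin.last n} ∈ C) (hne : C ≠ {{Fin.last n}}) :
    ∃ A ∈ Antichains n, fmap A = C := by
  obtain ⟨-, hnonempty, hanti⟩ := hC
  have hlift : ∀ b ∈ C, b ≠ {Fin.last n} → ∃ a, liftSet a = b := fun b hb hb' =>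
    exists_liftSet_eq fun h => hanti _ hlast b hb hb'.symm (singleton_subset_iff.2 h)
  set A : Finset (Finset (Fin n)) := {a | liftSet a ∈ C}
  have hmemA {a : Finset (Fin n)} : a ∈ A ↔ liftSet a ∈ C := by simp [A]
  refine ⟨A, ⟨?_, fun a ha => ?_, fun a ha a' ha' hne' hsub => ?_⟩, ?_⟩
  · obtain ⟨b, hb, hb'⟩ : ∃ b ∈ C, b ≠ {Fin.last n} := by
      by_contra! h
      exact hne (eq_singleton_iff_unique_mem.2 ⟨hlast, h⟩)
    obtain ⟨a, rfl⟩ := hlift b hb hb'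
    exact ⟨a, hmemA.2 hb⟩
  · exact liftSet_nonempty.1 (hnonempty _ (hmemA.1 ha))
  · exact hanti _ (hmemA.1 ha) _ (hmemA.1 ha') (fun h => hne' (liftSet_injective h))
      (liftSet_subset_liftSet.2 hsub)
  · ext b
    refine ⟨fun hb => ?_, fun hb => ?_⟩
    · rcases mem_fmap.1 hb with ⟨a, ha, rfl⟩ | rfl
      exacts [hmemA.1 ha, hlast]
    · by_cases hb' : b = {Fin.last n}
      · exact hb' ▸ singleton_last_mem_fmap A
      · obtain ⟨a, rfl⟩ := hlift b hb hb'
        exact liftSet_mem_fmap (hmemA.2 hb)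

variable (n) in
def antichainsFinset : Finset (Finset (Finset (Fin n))) := {A | A ∈ Antichains n}

lemma mem_antichainsFinset {A : Finset (Finset (Fin n))} :
    A ∈ antichainsFinset n ↔ A ∈ Antichains n := by
  simp [antichainsFinset]

def below (B : Finset (Finset (Fin n))) : Finset (Finset (Finset (Fin n))) :=
  {C ∈ antichainsFinset n | achLE C B}

lemma filter_antichains_achLE_eq_below (B : Finset (Finset (Fin n))) :
    Finset.univ.filter (fun C => C ∈ Antichains n ∧ achLE C B) = below B := by
  ext C
  simp [below, antichainsFinset]

lemma mem_below {B C : Finset (Finset (Fin n))} :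
    C ∈ below B ↔ C ∈ Antichains n ∧ achLE C B := by
  simp [below, antichainsFinset]

lemma eq_of_forall_sum_below_eq {M : Type*} [AddCommGroup M] {f g : Finset (Finset (Fin n)) → M}
    (h : ∀ B ∈ Antichains n, ∑ C ∈ below B, f C = ∑ C ∈ below B, g C) :
    ∀ A ∈ Antichains n, f A = g A := fun _ hA =>
  eqOn_of_forall_sum_filter_eq (fun A _ => achLE_refl A) (fun _ _ _ _ _ _ => achLE_trans)
    (fun _ hA _ hB => achLE_antisymm (mem_antichainsFinset.1 hA) (mem_antichainsFinset.1 hB))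
    (fun B hB => h B (mem_antichainsFinset.1 hB)) (mem_antichainsFinset.2 hA)

lemma below_fmap {A : Finset (Finset (Fin n))} (hA : A ∈ Antichains n) :
    below (fmap A) = (below A).image fmap := by
  ext C
  simp only [mem_image, mem_below]
  constructor
  · rintro ⟨hC, hCA⟩
    have hlast := singleton_mem_of_achLE hC.2.1 hCA (singleton_last_mem_fmap A)
    have hne : C ≠ {{Fin.last n}} := by
      rintro rfl
      exact fmap_ne_singleton_singleton_last hA.1 (achLE_antisymm (fmap_mem_antichains hA) hC
        (achLE_singleton_of_mem (singleton_last_mem_fmap A)) hCA)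
    obtain ⟨C', hC', rfl⟩ := exists_fmap_eq hC hlast hne
    exact ⟨C', ⟨hC', achLE_fmap_fmap.1 hCA⟩, rfl⟩
  · rintro ⟨C', ⟨hC', hC'A⟩, rfl⟩
    exact ⟨fmap_mem_antichains hC', achLE_fmap_fmap.2 hC'A⟩

lemma sum_below_fmap {M : Type*} [AddCommMonoid M] {A : Finset (Finset (Fin n))}
    (hA : A ∈ Antichains n) (φ : Finset (Finset (Fin (n + 1))) → M) :
    ∑ C ∈ below (fmap A), φ C = ∑ C ∈ below A, φ (fmap C) := by
  rw [below_fmap hA,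
    sum_image fun _ hC _ hC' => fmap_injOn (mem_below.1 hC).1 (mem_below.1 hC').1]

lemma below_singleton_singleton_last :
    below {{Fin.last n}} = insert {{Fin.last n}} ((antichainsFinset n).image fmap) := by
  ext C
  simp only [mem_insert, mem_image, mem_below, mem_antichainsFinset]
  constructor
  · rintro ⟨hC, hCl⟩
    have hlast := singleton_mem_of_achLE hC.2.1 hCl (mem_singleton_self _)
    by_cases hne : C = {{Fin.last n}}
    · exact Or.inl hne
    · exact Or.inr (exists_fmap_eq hC hlast hne)
  · rintro (rfl | ⟨C', hC', rfl⟩)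
    · exact ⟨singleton_mem_antichains (singleton_nonempty _), achLE_refl _⟩
    · exact ⟨fmap_mem_antichains hC', achLE_singleton_of_mem (singleton_last_mem_fmap C')⟩

lemma sum_below_singleton_singleton_last {M : Type*} [AddCommMonoid M]
    (φ : Finset (Finset (Fin (n + 1))) → M) :
    ∑ C ∈ below {{Fin.last n}}, φ C =
      φ {{Fin.last n}} + ∑ A ∈ antichainsFinset n, φ (fmap A) := by
  have hnotMem : {{Fin.last n}} ∉ (antichainsFinset n).image fmap := by
    simp only [mem_image, mem_antichainsFinset, not_exists, not_and]
    exact fun A hA => fmap_ne_singleton_singleton_last hA.1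
  rw [below_singleton_singleton_last, sum_insert hnotMem, sum_image fun _ hA _ hB =>
    fmap_injOn (mem_antichainsFinset.1 hA) (mem_antichainsFinset.1 hB)]

lemma below_singleton_univ : below {(univ : Finset (Fin n))} = antichainsFinset n := by
  ext C
  simp only [mem_below, mem_antichainsFinset, and_iff_left_iff_imp]
  intro hC b hb
  obtain ⟨a, ha⟩ := hC.1
  exact ⟨a, ha, mem_singleton.1 hb ▸ subset_univ a⟩

end Antichains

theorem atoms_preserved_by_appending_whole (n : ℕ) (hn : 1 ≤ n)
    (Icap Ipart : Finset (Finset (Fin (n + 1))) → ℝ)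
    (Icapb Ipartb : Finset (Finset (Fin n)) → ℝ)
    (hmob : ∀ B ∈ Antichains (n + 1),
      Icap B = ∑ C ∈ Finset.univ.filter
        (fun C => C ∈ Antichains (n + 1) ∧ achLE C B), Ipart C)
    (hmobb : ∀ B ∈ Antichains n,
      Icapb B = ∑ C ∈ Finset.univ.filter
        (fun C => C ∈ Antichains n ∧ achLE C B), Ipartb C)
    (hagree : ∀ A ∈ Antichains n, Icap (fmap A) = Icapb A)
    (hlast : Icap ({({Fin.last n} : Finset (Fin (n + 1)))} : Finset (Finset (Fin (n + 1))))
      = Icapb ({(Finset.univ : Finset (Fin n))} : Finset (Finset (Fin n)))) :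
    (∀ A ∈ Antichains n, Ipart (fmap A) = Ipartb A) ∧
      Ipart ({({Fin.last n} : Finset (Fin (n + 1)))} : Finset (Finset (Fin (n + 1)))) = 0 := by
  simp only [filter_antichains_achLE_eq_below] at hmob hmobb
  have hatoms : ∀ A ∈ Antichains n, Ipart (fmap A) = Ipartb A := by
    refine eq_of_forall_sum_below_eq fun B hB => ?_
    rw [← hmobb B hB, ← hagree B hB, hmob _ (fmap_mem_antichains hB), sum_below_fmap hB]
  refine ⟨hatoms, ?_⟩
  have huniv : {(univ : Finset (Fin n))} ∈ Antichains n :=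
    singleton_mem_antichains (univ_nonempty_iff.2 ⟨⟨0, hn⟩⟩)
  have hsplit := hmob _ (singleton_mem_antichains (singleton_nonempty (Fin.last n)))
  rw [sum_below_singleton_singleton_last,
    sum_congr rfl fun A hA => hatoms A (mem_antichainsFinset.1 hA), ← below_singleton_univ,
    ← hmobb _ huniv, ← hlast] at hsplit
  linarith
end
end
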